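/- arXiv:1010.2420 — 3 statements merged into one kernel-verified Lean document; each statement's English description precedes it below -/
import Mathlib

section
/- In a reachability game with target set F, Eve has a winning strategy from v if and only if v belongs to the attractor Attr(F). -/
/-- An arena: a directed graph with every vertex having a successor,
and a partition of vertices between Eve (`eve v`) and Adam (`¬ eve v`). -/
structure Arena (V : Type) where
  E : V → V → Prop
  eve : V → Prop
  succ_exists : ∀ v, ∃ w, E v w

variable {V M : Type}

/-- A play from `v0`: an infinite path starting at `v0`. -/
def IsPlay (A : Arena V) (v0 : V) (π : ℕ → V) : Prop :=
  π 0 = v0 ∧ ∀ n, A.E (π n) (π (n + 1))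

/-- The finite history of a play up to time `n` (inclusive). -/
def hist (π : ℕ → V) (n : ℕ) : List V :=
  List.ofFn (fun i : Fin (n + 1) => π i)

/-- A strategy (a function from histories to vertices) is legal if it always moves along edges. -/
def Legal (A : Arena V) (σ : List V → V) : Prop :=
  ∀ (l : List V) (v : V), A.E v (σ (l ++ [v]))

/-- A play is consistent with Eve's strategy `σ`. -/
def ConsistentEve (A : Arena V) (σ : List V → V) (π : ℕ → V) : Prop :=
  ∀ n, A.eve (π n) → π (n + 1) = σ (hist π n)

/-- A play is consistent with Adam's strategy `τ`. -/
def ConsistentAdam (A : Arena V) (τ : List V → V) (π : ℕ → V) : Prop :=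
  ∀ n, ¬ A.eve (π n) → π (n + 1) = τ (hist π n)

/-- The generalized reachability objective: visit each `F i` at least once. -/
def GenReach {k : ℕ} (F : Fin k → Set V) (π : ℕ → V) : Prop :=
  ∀ i, ∃ n, π n ∈ F i

/-- Eve wins the generalized reachability game from `v0`. -/
def EveWinsGenReach {k : ℕ} (A : Arena V) (F : Fin k → Set V) (v0 : V) : Prop :=
  ∃ σ, Legal A σ ∧ ∀ π, IsPlay A v0 π → ConsistentEve A σ π → GenReach F π

/-- Adam wins the generalized reachability game from `v0`. -/
def AdamWinsGenReach {k : ℕ} (A : Arena V) (F : Fin k → Set V) (v0 : V) : Prop :=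
  ∃ τ, Legal A τ ∧ ∀ π, IsPlay A v0 π → ConsistentAdam A τ π → ¬ GenReach F π

/-- One step of the attractor computation. -/
def AttrStep (A : Arena V) (X : Set V) : Set V :=
  X ∪ {u | A.eve u ∧ ∃ v, A.E u v ∧ v ∈ X} ∪ {u | ¬ A.eve u ∧ ∀ v, A.E u v → v ∈ X}

/-- The attractor sequence `Attr_i(F)`. -/
def AttrSeq (A : Arena V) (F : Set V) : ℕ → Set V
  | 0 => F
  | n + 1 => AttrStep A (AttrSeq A F n)

/-- The attractor `Attr(F)`: union of the attractor sequence. -/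
def Attr (A : Arena V) (F : Set V) : Set V := ⋃ n, AttrSeq A F n

/-- A memory structure: initial memory state and update function on edges. -/
structure MemStruct (V M : Type) where
  m0 : M
  upd : M → V → V → M

/-- The sequence of memory states along a play. -/
def memTrace (μ : MemStruct V M) (π : ℕ → V) : ℕ → M
  | 0 => μ.m0
  | n + 1 => μ.upd (memTrace μ π n) (π n) (π (n + 1))

/-- A next-move function is legal if it always moves along edges. -/
def MemLegal (A : Arena V) (ν : V → M → V) : Prop :=
  ∀ v m, A.E v (ν v m)

/-- Consistency of a play with Eve's finite-memory strategy `(μ, ν)`. -/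
def MemConsistentEve (A : Arena V) (μ : MemStruct V M) (ν : V → M → V) (π : ℕ → V) : Prop :=
  ∀ n, A.eve (π n) → π (n + 1) = ν (π n) (memTrace μ π n)

/-- Consistency of a play with Adam's finite-memory strategy `(μ, ν)`. -/
def MemConsistentAdam (A : Arena V) (μ : MemStruct V M) (ν : V → M → V) (π : ℕ → V) : Prop :=
  ∀ n, ¬ A.eve (π n) → π (n + 1) = ν (π n) (memTrace μ π n)

/-- Eve wins with the finite-memory strategy `(μ, ν)` from `v0`. -/
def EveWinsWithMem {k : ℕ} (A : Arena V) (F : Fin k → Set V) (v0 : V)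
    (μ : MemStruct V M) (ν : V → M → V) : Prop :=
  MemLegal A ν ∧ ∀ π, IsPlay A v0 π → MemConsistentEve A μ ν π → GenReach F π

/-- Adam wins with the finite-memory strategy `(μ, ν)` from `v0`. -/
def AdamWinsWithMem {k : ℕ} (A : Arena V) (F : Fin k → Set V) (v0 : V)
    (μ : MemStruct V M) (ν : V → M → V) : Prop :=
  MemLegal A ν ∧ ∀ π, IsPlay A v0 π → MemConsistentAdam A μ ν π → ¬ GenReach F π


/-- Eve wins the reachability game with target `F` from `v0`. -/
def EveWinsReach (A : Arena V) (F : Set V) (v0 : V) : Prop :=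
  ∃ σ, Legal A σ ∧ ∀ π, IsPlay A v0 π → ConsistentEve A σ π → ∃ n, π n ∈ F


/-!
From `Attr_{n+1}(F)` Eve can move into `Attr_n(F)` and Adam cannot avoid doing so, so the
positional strategy that always moves to the lowest reachable level reaches `F`. Conversely, on
a finite arena the attractor sequence stabilises, so `Attr(F)` is closed under the attractor
step: from outside it, Eve cannot move in and Adam can always stay out, whatever Eve's strategy.
-/

lemma hist_eq_append (π : ℕ → V) (n : ℕ) :
    hist π n = List.ofFn (fun i : Fin n => π i) ++ [π n] := by
  rw [hist, List.ofFn_succ', List.concat_eq_append]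
  rfl

lemma hist_succ (π : ℕ → V) (n : ℕ) : hist π (n + 1) = hist π n ++ [π (n + 1)] :=
  hist_eq_append π (n + 1)

lemma hist_getLastD (π : ℕ → V) (n : ℕ) (d : V) : (hist π n).getLastD d = π n := by
  rw [hist_eq_append, List.getLastD_concat]

lemma exists_seq_succ_eq_step_hist (step : List V → V) (v : V) :
    ∃ π : ℕ → V, π 0 = v ∧ ∀ n, π (n + 1) = step (hist π n) := by
  let extend : List V → List V := fun l => l ++ [step l]
  let π : ℕ → V := fun n => (extend^[n] [v]).getLastD v
  have hπ : ∀ n, hist π n = extend^[n] [v] := by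
    intro n
    induction n with
    | zero => rfl
    | succ n ih =>
      rw [hist_succ, ih, Function.iterate_succ_apply']
      simp only [π, Function.iterate_succ_apply', extend, List.getLastD_concat]
  refine ⟨π, rfl, fun n => ?_⟩
  rw [hπ]
  simp only [π, Function.iterate_succ_apply', extend, List.getLastD_concat]

lemma attrSeq_monotone (A : Arena V) (F : Set V) : Monotone (AttrSeq A F) :=
  monotone_nat_of_le_succ fun _ _ hx => Or.inl (Or.inl hx)

lemma attrSeq_subset_attr {A : Arena V} {F : Set V} (n : ℕ) : AttrSeq A F n ⊆ Attr A F :=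
  Set.subset_iUnion (AttrSeq A F) n

lemma exists_attr_move (A : Arena V) (F : Set V) (u : V) :
    ∃ w, A.E u w ∧ ∀ n, (∃ w', A.E u w' ∧ w' ∈ AttrSeq A F n) → w ∈ AttrSeq A F n := by
  classical
  by_cases hlevel : ∃ n w, A.E u w ∧ w ∈ AttrSeq A F n
  · obtain ⟨w, huw, hw⟩ := Nat.find_spec hlevel
    exact ⟨w, huw, fun n hn => attrSeq_monotone A F (Nat.find_min' hlevel hn) hw⟩
  · obtain ⟨w, huw⟩ := A.succ_exists u
    exact ⟨w, huw, fun n hn => (hlevel ⟨n, hn⟩).elim⟩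

lemma exists_mem_of_mem_attrSeq {A : Arena V} {F : Set V} {f : V → V}
    (hf : ∀ u n, (∃ w, A.E u w ∧ w ∈ AttrSeq A F n) → f u ∈ AttrSeq A F n)
    {π : ℕ → V} (hπ : ∀ m, A.E (π m) (π (m + 1)))
    (hcons : ∀ m, A.eve (π m) → π (m + 1) = f (π m)) :
    ∀ n m, π m ∈ AttrSeq A F n → ∃ j, π j ∈ F := by
  intro n
  induction n with
  | zero => exact fun m hm => ⟨m, hm⟩
  | succ n ih =>
    rintro m ((hm | ⟨heve, hsucc⟩) | ⟨-, hall⟩)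
    · exact ih m hm
    · exact ih (m + 1) (hcons m heve ▸ hf _ n hsucc)
    · exact ih (m + 1) (hall _ (hπ m))

lemma eveWinsReach_of_mem_attr {A : Arena V} {F : Set V} {v : V} (hv : v ∈ Attr A F) :
    EveWinsReach A F v := by
  choose f hf using exists_attr_move A F
  obtain ⟨n, hn⟩ := Set.mem_iUnion.mp hv
  refine ⟨fun l => f (l.getLastD v), fun l u => ?_, fun π hplay hcons => ?_⟩
  · simpa only [List.getLastD_concat] using (hf u).1
  · refine exists_mem_of_mem_attrSeq (fun u => (hf u).2) hplay.2 (fun m hm => ?_) n 0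
      (hplay.1 ▸ hn)
    rw [hcons m hm]
    exact congrArg f (hist_getLastD π m v)

lemma exists_attr_eq_attrSeq [Finite V] (A : Arena V) (F : Set V) :
    ∃ N, Attr A F = AttrSeq A F N := by
  obtain ⟨N, hN⟩ := WellFoundedGT.monotone_chain_condition ⟨AttrSeq A F, attrSeq_monotone A F⟩
  refine ⟨N, (Set.iUnion_subset fun n => ?_).antisymm (attrSeq_subset_attr N)⟩
  rcases le_total n N with h | h
  · exact attrSeq_monotone A F h
  · exact (hN n h).ge

lemma attrStep_attr_subset [Finite V] (A : Arena V) (F : Set V) :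
    AttrStep A (Attr A F) ⊆ Attr A F := by
  obtain ⟨N, hN⟩ := exists_attr_eq_attrSeq A F
  rw [hN]
  exact attrSeq_subset_attr (N + 1) |>.trans hN.le

lemma exists_adam_move_not_mem_attr [Finite V] (A : Arena V) (F : Set V) (u : V) :
    ∃ w, A.E u w ∧ (u ∉ Attr A F → ¬ A.eve u → w ∉ Attr A F) := by
  by_cases hu : u ∉ Attr A F ∧ ¬ A.eve u
  · by_contra! hall
    exact hu.1 (attrStep_attr_subset A F (Or.inr ⟨hu.2, fun w huw => (hall w huw).2.2⟩))
  · obtain ⟨w, huw⟩ := A.succ_exists u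
    exact ⟨w, huw, fun h1 h2 => (hu ⟨h1, h2⟩).elim⟩

lemma exists_play_not_mem_attr [Finite V] {A : Arena V} {F : Set V} {v : V} (hv : v ∉ Attr A F)
    {σ : List V → V} (hσ : Legal A σ) :
    ∃ π, IsPlay A v π ∧ ConsistentEve A σ π ∧ ∀ n, π n ∉ Attr A F := by
  classical
  choose g hg using exists_adam_move_not_mem_attr A F
  obtain ⟨π, hπ0, hπ⟩ := exists_seq_succ_eq_step_hist
    (fun l => if A.eve (l.getLastD v) then σ l else g (l.getLastD v)) v
  simp only [hist_getLastD] at hπ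
  have hedge : ∀ n, A.E (π n) (π (n + 1)) := by
    intro n
    rw [hπ]
    split_ifs
    · rw [hist_eq_append]
      exact hσ _ _
    · exact (hg _).1
  refine ⟨π, ⟨hπ0, hedge⟩, fun n heve => by rw [hπ, if_pos heve], fun n => ?_⟩
  induction n with
  | zero => exact hπ0 ▸ hv
  | succ n ih =>
    by_cases heve : A.eve (π n)
    · exact fun hin => ih (attrStep_attr_subset A F (Or.inl (Or.inr ⟨heve, _, hedge n, hin⟩)))
    · rw [hπ, if_neg heve]
      exact (hg _).2 ih heve

/-- Eve wins the reachability game from `v` iff `v ∈ Attr(F)`. -/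
theorem eveWinsReach_iff_mem_attr {V : Type} [Fintype V] (A : Arena V) (F : Set V) (v : V) :
    EveWinsReach A F v ↔ v ∈ Attr A F := by
  refine ⟨fun ⟨σ, hσ, hwin⟩ => ?_, eveWinsReach_of_mem_attr⟩
  by_contra hv
  obtain ⟨π, hplay, hcons, hout⟩ := exists_play_not_mem_attr hv hσ
  obtain ⟨n, hn⟩ := hwin π hplay hcons
  exact hout n (attrSeq_subset_attr 0 hn)
end

section
/- For every k ≥ 1, there exists a generalized reachability game with k reachability sets in which Eve has a winning strategy from the initial vertex, but every winning strategy for Eve requires at least 2^k − 1 memory states. -/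
variable {V M : Type}

/-!
In the flower, Eve wins by answering a petal with its good vertex the first time Adam offers it
and with its sink afterwards: the sink of petal `j` lies in every reachability set but the `j`-th,
and the good vertex of `j` has been visited by then.

Conversely, to a memory state `m` at the heart attach the set of petals at which Eve, with memory
`m`, goes to the sink. Every proper subset `S` of the petals arises. Adam offers petals of `S`
that Eve still answers with their good vertex, until Eve would give up at all of `S`; this must
happen, since otherwise the play stays forever in the heart, the petals of `S` and their good
vertices and misses the reachability set of a petal outside `S`. At that point Eve gives up at no
other petal either: she would give up at a petal whose good vertex has not been visited.
-/

lemma hist_eq_map_range_append (π : ℕ → V) (n : ℕ) :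
    hist π n = (List.range n).map π ++ [π n] := by
  refine List.ext_getElem (by simp [hist]) fun i _ _ => ?_
  simp only [hist, List.getElem_ofFn, List.getElem_append, List.length_map, List.length_range]
  grind

section Outcome

variable (A : Arena V) (μ : MemStruct V M) (ν : V → M → V) (τ : ℕ → V → V) (v0 : V)

open Classical in
/-- The play, paired with Eve's memory, in which Eve follows `(μ, ν)` and Adam moves from `v`
to `τ n v` at time `n`. -/
noncomputable def outcome : ℕ → V × M
  | 0 => (v0, μ.m0)
  | n + 1 =>
    let v := (outcome n).1
    let m := (outcome n).2
    let w := if A.eve v then ν v m else τ n v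
    (w, μ.upd m v w)

variable {A μ ν τ v0}

lemma outcome_succ_of_eve {n : ℕ} {v : V} {m : M} (h : outcome A μ ν τ v0 n = (v, m))
    (hv : A.eve v) : outcome A μ ν τ v0 (n + 1) = (ν v m, μ.upd m v (ν v m)) := by
  simp [outcome, h, hv]

lemma outcome_succ_of_not_eve {n : ℕ} {v : V} {m : M} (h : outcome A μ ν τ v0 n = (v, m))
    (hv : ¬ A.eve v) : outcome A μ ν τ v0 (n + 1) = (τ n v, μ.upd m v (τ n v)) := by
  simp [outcome, h, hv]

lemma memTrace_outcome (n : ℕ) :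
    memTrace μ (fun n => (outcome A μ ν τ v0 n).1) n = (outcome A μ ν τ v0 n).2 := by
  induction n with
  | zero => rfl
  | succ n ih => simp only [memTrace, ih]; rfl

lemma isPlay_outcome (hν : MemLegal A ν) (hτ : ∀ n v, A.E v (τ n v)) :
    IsPlay A v0 (fun n => (outcome A μ ν τ v0 n).1) := by
  refine ⟨rfl, fun n => ?_⟩
  dsimp only
  by_cases hv : A.eve (outcome A μ ν τ v0 n).1
  · rw [outcome_succ_of_eve rfl hv]; exact hν _ _
  · rw [outcome_succ_of_not_eve rfl hv]; exact hτ _ _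

lemma memConsistentEve_outcome :
    MemConsistentEve A μ ν (fun n => (outcome A μ ν τ v0 n).1) := by
  intro n hv
  dsimp only at hv ⊢
  rw [memTrace_outcome, outcome_succ_of_eve rfl hv]

end Outcome

namespace Flower

inductive Vertex (k : ℕ)
  | heart
  | petal (i : Fin k)
  | good (i : Fin k)
  | sink (i : Fin k)
  deriving DecidableEq, Fintype

open Vertex

variable {k : ℕ}

def Edge : Vertex k → Vertex k → Prop
  | heart, w => ∃ i, w = petal i
  | petal i, w => w = good i ∨ w = sink i
  | good _, w => w = heart
  | sink i, w => w = sink i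

lemma eq_petal_of_edge_good {v : Vertex k} {i : Fin k} (h : Edge v (good i)) : v = petal i := by
  cases v <;> simp_all [Edge]

lemma eq_petal_or_eq_sink_of_edge_sink {v : Vertex k} {i : Fin k} (h : Edge v (sink i)) :
    v = petal i ∨ v = sink i := by
  cases v <;> simp_all [Edge]

def arena (k : ℕ) (hk : 0 < k) : Arena (Vertex k) where
  E := Edge
  eve v := ∃ i, v = petal i
  succ_exists
    | heart => ⟨petal ⟨0, hk⟩, ⟨0, hk⟩, rfl⟩
    | petal i => ⟨good i, Or.inl rfl⟩
    | good _ => ⟨heart, rfl⟩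
    | sink i => ⟨sink i, rfl⟩

def target (i : Fin k) : Set (Vertex k) := {v | v = good i ∨ ∃ j ≠ i, v = sink j}

@[simp] lemma heart_notMem_target (i : Fin k) : heart ∉ target i := by simp [target]

@[simp] lemma petal_notMem_target (i j : Fin k) : petal j ∉ target i := by simp [target]

@[simp] lemma good_mem_target_iff {i j : Fin k} : good j ∈ target i ↔ j = i := by simp [target]

@[simp] lemma sink_mem_target_iff {i j : Fin k} : sink j ∈ target i ↔ j ≠ i := by
  simp [target]

variable {hk : 0 < k} {v0 : Vertex k} {π : ℕ → Vertex k}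

lemma sink_absorbing (hπ : IsPlay (arena k hk) v0 π) {n : ℕ} {i : Fin k} (h : π n = sink i)
    (r : ℕ) : π (n + r) = sink i := by
  induction r with
  | zero => exact h
  | succ r ih =>
    have := hπ.2 (n + r)
    rwa [ih] at this

lemma exists_petal_before_sink (hπ : IsPlay (arena k hk) heart π) {n : ℕ} {i : Fin k}
    (h : π n = sink i) : ∃ m, π m = petal i ∧ π (m + 1) = sink i := by
  induction n with
  | zero => simp [hπ.1] at h
  | succ n ih =>
    have hE : Edge (π n) (sink i) := h ▸ hπ.2 n
    rcases eq_petal_or_eq_sink_of_edge_sink hE with hn | hn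
    · exact ⟨n, hn, h⟩
    · exact ih hn

def eveMove (hk : 0 < k) (past : List (Vertex k)) : Vertex k → Vertex k
  | heart => petal ⟨0, hk⟩
  | petal i => if good i ∈ past then sink i else good i
  | good _ => heart
  | sink i => sink i

def eveStrategy (hk : 0 < k) (l : List (Vertex k)) : Vertex k :=
  match l.getLast? with
  | none => heart
  | some v => eveMove hk l.dropLast v

lemma eveStrategy_append_singleton (l : List (Vertex k)) (v : Vertex k) :
    eveStrategy hk (l ++ [v]) = eveMove hk l v := by
  simp [eveStrategy]

lemma legal_eveStrategy : Legal (arena k hk) (eveStrategy hk) := by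
  intro l v
  rw [eveStrategy_append_singleton]
  cases v with
  | heart => exact ⟨_, rfl⟩
  | petal i => by_cases h : good i ∈ l <;> simp [arena, Edge, eveMove, h]
  | good _ => rfl
  | sink _ => rfl

lemma eveStrategy_succ_of_petal (hπ : ConsistentEve (arena k hk) (eveStrategy hk) π) {m : ℕ}
    {i : Fin k} (h : π m = petal i) :
    π (m + 1) = if ∃ t < m, π t = good i then sink i else good i := by
  rw [hπ m ⟨i, h⟩, hist_eq_map_range_append, eveStrategy_append_singleton, h]
  simp [eveMove]

lemma exists_good_after (hπ : IsPlay (arena k hk) v0 π) (hsink : ∀ n i, π n ≠ sink i)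
    (n : ℕ) : ∃ m > n, ∃ i, π m = good i := by
  have good_of_petal : ∀ {m i}, π m = petal i → π (m + 1) = good i := fun {m i} h =>
    (h ▸ hπ.2 m : Edge (petal i) (π (m + 1))).resolve_right (hsink _ _)
  cases hv : π (n + 1) with
  | heart =>
    obtain ⟨i, hi⟩ : Edge heart (π (n + 2)) := hv ▸ hπ.2 (n + 1)
    exact ⟨n + 3, by omega, i, good_of_petal hi⟩
  | petal i => exact ⟨n + 2, by omega, i, good_of_petal hv⟩
  | good i => exact ⟨n + 1, by omega, i, hv⟩
  | sink i => exact absurd hv (hsink _ _)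

theorem eveWinsGenReach_arena : EveWinsGenReach (arena k hk) target heart := by
  refine ⟨eveStrategy hk, legal_eveStrategy, fun π hπ hcons => ?_⟩
  by_cases hsink : ∃ n i, π n = sink i
  · obtain ⟨n, j, hn⟩ := hsink
    obtain ⟨m, hm, hm_succ⟩ := exists_petal_before_sink hπ hn
    obtain ⟨t, -, ht⟩ : ∃ t < m, π t = good j := by
      by_contra h
      rw [eveStrategy_succ_of_petal hcons hm, if_neg h] at hm_succ
      cases hm_succ
    intro i
    by_cases hji : j = i
    · exact ⟨t, by simp [ht, hji]⟩
    · exact ⟨n, by simp [hn, hji]⟩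
  · push Not at hsink
    exfalso
    -- infinitely many visits to the finitely many good vertices, yet each is visited only once
    have hinf : {n | ∃ i, π n = good i}.Infinite :=
      Set.infinite_of_forall_exists_gt fun n =>
        (exists_good_after hπ hsink n).imp fun _ h => ⟨h.2, h.1⟩
    obtain ⟨t₁, -, t₂, ⟨i, hi⟩, hlt, heq⟩ :=
      hinf.exists_lt_map_eq_of_mapsTo (Set.mapsTo_univ π _) Set.finite_univ
    obtain ⟨m, rfl⟩ : ∃ m, t₂ = m + 1 := ⟨t₂ - 1, by omega⟩
    have hm : π m = petal i := eq_petal_of_edge_good (hi ▸ hπ.2 m)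
    have ht₁ : t₁ ≠ m := fun h => by simp [h, hm, hi] at heq
    have hrevisit : ∃ t < m, π t = good i := ⟨t₁, by omega, heq.trans hi⟩
    rw [eveStrategy_succ_of_petal hcons hm, if_pos hrevisit] at hi
    cases hi

section LowerBound

variable (μ : MemStruct (Vertex k) M) (ν : Vertex k → M → Vertex k)

/-- The petals at which Eve, entering from the heart with memory `m`, moves to the sink. -/
def sinkPetals (m : M) : Finset (Fin k) :=
  {i | ν (petal i) (μ.upd m heart (petal i)) = sink i}

def roundStep (m : M) (i : Fin k) : M :=
  μ.upd (μ.upd (μ.upd m heart (petal i)) (petal i) (good i)) (good i) heart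

def roundMem (c : ℕ → Fin k) : ℕ → M
  | 0 => μ.m0
  | t + 1 => roundStep μ (roundMem c t) (c t)

def AvoidsSink (c : ℕ → Fin k) (t : ℕ) : Prop :=
  ∀ s < t, c s ∉ sinkPetals μ ν (roundMem μ c s)

/-- Adam chooses petal `c s` in round `s`; as long as Eve avoids the sinks, round `s` starts at
time `3 * s`. -/
def adamMove (c : ℕ → Fin k) (n : ℕ) : Vertex k → Vertex k
  | heart => petal (c (n / 3))
  | petal i => good i
  | good _ => heart
  | sink i => sink i

noncomputable def adamPlay (hk : 0 < k) (c : ℕ → Fin k) : ℕ → Vertex k × M :=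
  outcome (arena k hk) μ ν (adamMove c) heart

variable {μ ν} {c : ℕ → Fin k} {t : ℕ}

lemma roundMem_congr {c' : ℕ → Fin k} (h : ∀ s < t, c s = c' s) :
    roundMem μ c t = roundMem μ c' t := by
  induction t with
  | zero => rfl
  | succ t ih => simp only [roundMem, ih fun s hs => h s (by omega), h t (by omega)]

lemma AvoidsSink.mono {s : ℕ} (h : AvoidsSink μ ν c t) (hst : s ≤ t) : AvoidsSink μ ν c s :=
  fun r hr => h r (by omega)

lemma isPlay_adamPlay (hν : MemLegal (arena k hk) ν) (c : ℕ → Fin k) :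
    IsPlay (arena k hk) heart fun n => (adamPlay μ ν hk c n).1 :=
  isPlay_outcome hν fun n v => by cases v <;> simp [arena, Edge, adamMove]

lemma memConsistentEve_adamPlay (c : ℕ → Fin k) :
    MemConsistentEve (arena k hk) μ ν fun n => (adamPlay μ ν hk c n).1 :=
  memConsistentEve_outcome

section Steps

variable {n : ℕ} {m : M}

lemma adamPlay_succ_of_heart (h : adamPlay μ ν hk c n = (heart, m)) :
    adamPlay μ ν hk c (n + 1) = (petal (c (n / 3)), μ.upd m heart (petal (c (n / 3)))) :=
  outcome_succ_of_not_eve h (by simp [arena])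

lemma adamPlay_succ_of_petal {i : Fin k} (h : adamPlay μ ν hk c n = (petal i, m)) :
    adamPlay μ ν hk c (n + 1) = (ν (petal i) m, μ.upd m (petal i) (ν (petal i) m)) :=
  outcome_succ_of_eve h ⟨i, rfl⟩

lemma adamPlay_succ_of_good {i : Fin k} (h : adamPlay μ ν hk c n = (good i, m)) :
    adamPlay μ ν hk c (n + 1) = (heart, μ.upd m (good i) heart) :=
  outcome_succ_of_not_eve h (by simp [arena])

end Steps

lemma adamPlay_round (hν : MemLegal (arena k hk) ν)
    (h : adamPlay μ ν hk c (3 * t) = (heart, roundMem μ c t))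
    (hct : c t ∉ sinkPetals μ ν (roundMem μ c t)) :
    (adamPlay μ ν hk c (3 * t + 1)).1 = petal (c t) ∧
      (adamPlay μ ν hk c (3 * t + 2)).1 = good (c t) ∧
      adamPlay μ ν hk c (3 * t + 3) = (heart, roundMem μ c (t + 1)) := by
  have h₁ := adamPlay_succ_of_heart h
  rw [Nat.mul_div_cancel_left t three_pos] at h₁
  have hgood : ν (petal (c t)) (μ.upd (roundMem μ c t) heart (petal (c t))) = good (c t) :=
    (hν (petal (c t)) (μ.upd (roundMem μ c t) heart (petal (c t)))).resolve_right
      (by simpa [sinkPetals] using hct)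
  have h₂ := adamPlay_succ_of_petal h₁
  rw [hgood] at h₂
  exact ⟨by rw [h₁], by rw [h₂], adamPlay_succ_of_good h₂⟩

lemma adamPlay_three_mul (hν : MemLegal (arena k hk) ν) (hc : AvoidsSink μ ν c t) :
    adamPlay μ ν hk c (3 * t) = (heart, roundMem μ c t) := by
  induction t with
  | zero => rfl
  | succ t ih =>
    exact (adamPlay_round hν (ih (hc.mono t.le_succ)) (hc t t.lt_succ_self)).2.2

lemma exists_eq_of_mem_target (hν : MemLegal (arena k hk) ν) (hc : AvoidsSink μ ν c t)
    {n : ℕ} (hn : n < 3 * t) {j : Fin k} (h : (adamPlay μ ν hk c n).1 ∈ target j) :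
    ∃ s < t, c s = j := by
  have hs : n / 3 < t := by omega
  have h₀ := adamPlay_three_mul hν (hc.mono hs.le)
  obtain ⟨h₁, h₂, -⟩ := adamPlay_round hν h₀ (hc _ hs)
  refine ⟨n / 3, hs, ?_⟩
  obtain hn | hn | hn : n = 3 * (n / 3) ∨ n = 3 * (n / 3) + 1 ∨ n = 3 * (n / 3) + 2 := by omega
  · rw [hn, h₀] at h; simp at h
  · rw [hn, h₁] at h; simp at h
  · rw [hn, h₂] at h; simpa using h

lemma exists_eq_of_forall_avoidsSink (hwin : EveWinsWithMem (arena k hk) target heart μ ν)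
    (hc : ∀ t, AvoidsSink μ ν c t) (j : Fin k) :
    ∃ s, c s = j := by
  obtain ⟨n, hn⟩ := hwin.2 _ (isPlay_adamPlay hwin.1 c) (memConsistentEve_adamPlay c) j
  obtain ⟨s, -, hs⟩ := exists_eq_of_mem_target hwin.1 (hc (n + 1)) (by omega) hn
  exact ⟨s, hs⟩

lemma exists_eq_of_mem_sinkPetals (hwin : EveWinsWithMem (arena k hk) target heart μ ν)
    (hc : AvoidsSink μ ν c t) {i : Fin k}
    (hi : i ∈ sinkPetals μ ν (roundMem μ c t)) : ∃ s < t, c s = i := by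
  set c' : ℕ → Fin k := fun s => if s < t then c s else i
  have hagree : ∀ s ≤ t, roundMem μ c' s = roundMem μ c s :=
    fun s hs => roundMem_congr fun r hr => if_pos (by omega)
  have hc' : AvoidsSink μ ν c' t := fun s hs => by
    rw [hagree s hs.le, show c' s = c s from if_pos hs]
    exact hc s hs
  have h₀ := adamPlay_three_mul (hk := hk) hwin.1 hc'
  rw [hagree t le_rfl] at h₀
  have h₁ := adamPlay_succ_of_heart h₀
  rw [Nat.mul_div_cancel_left t three_pos, show c' t = i from if_neg (lt_irrefl t)] at h₁
  have h₂ := adamPlay_succ_of_petal h₁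
  rw [show ν (petal i) _ = sink i by simpa [sinkPetals] using hi] at h₂
  have hsink := sink_absorbing (isPlay_adamPlay hwin.1 c') (congrArg Prod.fst h₂)
  obtain ⟨n, hn⟩ := hwin.2 _ (isPlay_adamPlay hwin.1 c') (memConsistentEve_adamPlay c') i
  dsimp only at hn
  by_cases hlt : n < 3 * t
  · obtain ⟨s, hs, hs'⟩ := exists_eq_of_mem_target hwin.1 hc' hlt hn
    exact ⟨s, hs, (if_pos hs).symm.trans hs'⟩
  · exfalso
    obtain ⟨r, rfl⟩ := Nat.exists_eq_add_of_le (not_lt.1 hlt)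
    rcases r with _ | _ | r
    · simp [h₀] at hn
    · simp [h₁] at hn
    · rw [show 3 * t + (r + 1 + 1) = 3 * t + 1 + 1 + r by omega, hsink r] at hn
      simp at hn

lemma exists_avoidsSink_subset_sinkPetals (hwin : EveWinsWithMem (arena k hk) target heart μ ν)
    {S : Finset (Fin k)} (hS : S ≠ Finset.univ) :
    ∃ c t, AvoidsSink μ ν c t ∧ (∀ s < t, c s ∈ S) ∧
      S ⊆ sinkPetals μ ν (roundMem μ c t) := by
  obtain ⟨j, hj⟩ : ∃ j, j ∉ S := by simpa [Finset.eq_univ_iff_forall] using hS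
  by_contra! H
  -- Otherwise Adam can keep choosing petals of `S` forever without Eve ever going to a sink.
  let pick (m : M) : Fin k := if h : ∃ i ∈ S, i ∉ sinkPetals μ ν m then h.choose else j
  let mem (t : ℕ) : M := (fun m => roundStep μ m (pick m))^[t] μ.m0
  let c (t : ℕ) : Fin k := pick (mem t)
  have hmem : ∀ t, roundMem μ c t = mem t := by
    intro t
    induction t with
    | zero => rfl
    | succ t ih =>
      rw [roundMem, ih]
      exact (Function.iterate_succ_apply' (fun m => roundStep μ m (pick m)) t μ.m0).symm
  have hc : ∀ t, AvoidsSink μ ν c t ∧ ∀ s < t, c s ∈ S := by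
    intro t
    induction t with
    | zero => simp [AvoidsSink]
    | succ t ih =>
      obtain ⟨i, hiS, hi⟩ := Finset.not_subset.1 (H c t ih.1 ih.2)
      rw [hmem] at hi
      have hpick : ∃ i ∈ S, i ∉ sinkPetals μ ν (mem t) := ⟨i, hiS, hi⟩
      have hct : c t ∈ S ∧ c t ∉ sinkPetals μ ν (roundMem μ c t) := by
        rw [hmem]
        simpa only [c, pick, dif_pos hpick] using hpick.choose_spec
      refine ⟨fun s hs => ?_, fun s hs => ?_⟩ <;>
        obtain hs | rfl := Nat.lt_succ_iff_lt_or_eq.1 hs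
      exacts [ih.1 s hs, hct.2, ih.2 s hs, hct.1]
  obtain ⟨s, hs⟩ := exists_eq_of_forall_avoidsSink hwin (fun t => (hc t).1) j
  exact hj (hs ▸ (hc (s + 1)).2 s s.lt_succ_self)

lemma exists_sinkPetals_eq (hwin : EveWinsWithMem (arena k hk) target heart μ ν)
    {S : Finset (Fin k)} (hS : S ≠ Finset.univ) :
    ∃ m, sinkPetals μ ν m = S := by
  obtain ⟨c, t, hc, hcS, hsub⟩ := exists_avoidsSink_subset_sinkPetals hwin hS
  refine ⟨roundMem μ c t, Finset.Subset.antisymm (fun i hi => ?_) hsub⟩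
  obtain ⟨s, hs, rfl⟩ := exists_eq_of_mem_sinkPetals hwin hc hi
  exact hcS s hs

end LowerBound

end Flower

/-- for every `k ≥ 1` there is a generalized reachability game with `k`
reachability sets which Eve wins, but where every winning strategy for Eve needs at
least `2^k - 1` memory states. -/
theorem eve_memory_lower_bound (k : ℕ) (hk : 1 ≤ k) :
    ∃ (V : Type) (instV : Fintype V) (A : Arena V) (F : Fin k → Set V) (v0 : V),
      EveWinsGenReach A F v0 ∧
      ∀ (M : Type) (inst : Fintype M) (μ : MemStruct V M) (ν : V → M → V),
        EveWinsWithMem A F v0 μ ν → 2 ^ k - 1 ≤ @Fintype.card M inst := by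
  refine ⟨Flower.Vertex k, inferInstance, Flower.arena k hk, Flower.target, .heart,
    Flower.eveWinsGenReach_arena, fun M _ μ ν hwin => ?_⟩
  calc 2 ^ k - 1 = (Finset.univ.erase (Finset.univ : Finset (Fin k))).card := by
        simp [Finset.card_erase_of_mem]
    _ ≤ (Finset.univ.image (Flower.sinkPetals μ ν)).card := Finset.card_le_card fun S hS => by
        obtain ⟨m, hm⟩ := Flower.exists_sinkPetals_eq hwin (Finset.ne_of_mem_erase hS)
        exact Finset.mem_image.2 ⟨m, Finset.mem_univ m, hm⟩
    _ ≤ Fintype.card M := Finset.card_image_le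
end

section
/- For every odd k = 2p + 1, there exists a generalized reachability game with k reachability sets in which Adam wins from the initial vertex, but every winning strategy for Adam requires at least C(k, p) memory states. -/
variable {V M : Type}

/-!
Eve first visits a `p`-set `S` of colors, then Adam, at a vertex shared by all of Eve's
choices, visits a `p`-set `T`, and finally Eve visits at most `p` further colors. Copying
`S` wins for Adam, as then at most `2p` colors are seen. Any other answer loses: `S ∪ T`
then has at least `p + 1` elements and Eve covers the rest. So a winning memory
structure must be in pairwise distinct states at the shared vertex after the
`C(2p+1, p)` choices of Eve.
-/

namespace Finset

variable {α : Type} [DecidableEq α] {s t : Finset α}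

theorem card_lt_card_union_of_ne (hst : s ≠ t) (hcard : #s = #t) : #s < #(s ∪ t) := by
  refine card_lt_card (ssubset_iff_subset_ne.2 ⟨subset_union_left, fun h => hst ?_⟩)
  have hts : t ⊆ s := by
    rw [h]
    exact subset_union_right
  exact (eq_of_subset_of_card_le hts hcard.le).symm

theorem union_ne_univ_of_card_add_card_lt [Fintype α] (h : #s + #t < Fintype.card α) :
    s ∪ t ≠ univ := fun hst => by
  have := card_union_le s t
  rw [hst, card_univ] at this
  omega

end Finset

namespace AdamMemoryLowerBound

open Finset

abbrev Color (p : ℕ) := Fin (2 * p + 1)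

abbrev Choice (p : ℕ) := {S : Finset (Color p) // #S = p}

abbrev SmallChoice (p : ℕ) := {U : Finset (Color p) // #U ≤ p}

instance (p : ℕ) : Inhabited (Choice p) :=
  ⟨⟨(univ : Finset (Fin p)).map (Fin.castLEEmb (by omega)), by simp⟩⟩

inductive Vertex (p : ℕ) : Type where
  | init : Vertex p
  | picked : Choice p → Vertex p
  | hub : Vertex p
  | answered : Choice p → Vertex p
  | final : SmallChoice p → Vertex p
  deriving DecidableEq, Fintype

variable {p : ℕ}

inductive Edge : Vertex p → Vertex p → Prop where
  | init_picked (S) : Edge .init (.picked S)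
  | picked_hub (S) : Edge (.picked S) .hub
  | hub_answered (T) : Edge .hub (.answered T)
  | answered_final (T U) : Edge (.answered T) (.final U)
  | final_final (U) : Edge (.final U) (.final U)

variable (p) in
def arena : Arena (Vertex p) where
  E := Edge
  eve v := v ≠ .hub
  succ_exists
    | .init => ⟨_, .init_picked default⟩
    | .picked S => ⟨_, .picked_hub S⟩
    | .hub => ⟨_, .hub_answered default⟩
    | .answered T => ⟨_, .answered_final T ⟨∅, by simp⟩⟩
    | .final U => ⟨_, .final_final U⟩

theorem Edge.init_inv {w : Vertex p} (h : Edge .init w) : ∃ S, w = .picked S := by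
  cases h
  exact ⟨_, rfl⟩

theorem Edge.picked_inv {S : Choice p} {w : Vertex p} (h : Edge (.picked S) w) : w = .hub := by
  cases h
  rfl

theorem Edge.hub_inv {w : Vertex p} (h : Edge .hub w) : ∃ T, w = .answered T := by
  cases h
  exact ⟨_, rfl⟩

theorem Edge.answered_inv {T : Choice p} {w : Vertex p} (h : Edge (.answered T) w) :
    ∃ U, w = .final U := by
  cases h
  exact ⟨_, rfl⟩

theorem Edge.final_inv {U : SmallChoice p} {w : Vertex p} (h : Edge (.final U) w) :
    w = .final U := by
  cases h
  rfl

def colors : Vertex p → Finset (Color p)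
  | .picked S => S
  | .answered T => T
  | .final U => U
  | _ => ∅

variable (p) in
def reachSets (i : Color p) : Set (Vertex p) := {v | i ∈ colors v}

def play (S T : Choice p) (U : SmallChoice p) : ℕ → Vertex p
  | 0 => .init
  | 1 => .picked S
  | 2 => .hub
  | 3 => .answered T
  | _ + 4 => .final U

theorem isPlay_play (S T : Choice p) (U : SmallChoice p) :
    IsPlay (arena p) .init (play S T U) := by
  refine ⟨rfl, fun n => ?_⟩
  rcases n with _ | _ | _ | _ | n
  exacts [.init_picked S, .picked_hub S, .hub_answered T, .answered_final T U, .final_final U]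

theorem eq_play_of_isPlay {π : ℕ → Vertex p} (hπ : IsPlay (arena p) .init π) :
    ∃ S T U, π = play S T U := by
  obtain ⟨h0, hE⟩ := hπ
  obtain ⟨S, h1⟩ := Edge.init_inv (h0 ▸ hE 0)
  have h2 := Edge.picked_inv (h1 ▸ hE 1)
  obtain ⟨T, h3⟩ := Edge.hub_inv (h2 ▸ hE 2)
  obtain ⟨U, h4⟩ := Edge.answered_inv (h3 ▸ hE 3)
  have hfinal : ∀ n, π (n + 4) = .final U := by
    intro n
    induction n with
    | zero => exact h4
    | succ n ih => exact Edge.final_inv (ih ▸ hE (n + 4))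
  refine ⟨S, T, U, funext fun n => ?_⟩
  rcases n with _ | _ | _ | _ | n
  exacts [h0, h1, h2, h3, hfinal n]

theorem genReach_play_iff {S T : Choice p} {U : SmallChoice p} :
    GenReach (reachSets p) (play S T U) ↔ S.1 ∪ T.1 ∪ U.1 = univ := by
  simp only [GenReach, reachSets, Set.mem_ofPred_eq, eq_univ_iff_forall, mem_union]
  refine forall_congr' fun i => ⟨fun ⟨n, hn⟩ => ?_, ?_⟩
  · rcases n with _ | _ | _ | _ | n <;> simp_all [play, colors]
  · rintro ((hS | hT) | hU)
    exacts [⟨1, hS⟩, ⟨3, hT⟩, ⟨4, hU⟩]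

noncomputable def adamStrategy (l : List (Vertex p)) : Vertex p :=
  match l with
  | [_, .picked S, .hub] => .answered S
  | _ => l.getLast?.elim .init fun v => Classical.choose ((arena p).succ_exists v)

theorem legal_adamStrategy : Legal (arena p) adamStrategy := by
  intro l v
  unfold adamStrategy
  split
  · rename_i S heq
    obtain rfl : v = .hub := by simpa using congrArg List.getLast? heq
    exact .hub_answered S
  · simpa using Classical.choose_spec ((arena p).succ_exists v)

theorem adamWins : AdamWinsGenReach (arena p) (reachSets p) .init := by
  refine ⟨adamStrategy, legal_adamStrategy, fun π hπ hcons hreach => ?_⟩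
  obtain ⟨S, T, U, rfl⟩ := eq_play_of_isPlay hπ
  have hTS : Vertex.answered T = .answered S := hcons 2 (by simp [arena, play])
  cases hTS
  refine union_ne_univ_of_card_add_card_lt ?_ (by simpa using genReach_play_iff.1 hreach)
  have := U.2
  simp only [S.2, Fintype.card_fin]
  omega

section Memory

variable {M : Type}

def memAtHub (μ : MemStruct (Vertex p) M) (S : Choice p) : M :=
  μ.upd (μ.upd μ.m0 .init (.picked S)) (.picked S) .hub

theorem memConsistentAdam_play {μ : MemStruct (Vertex p) M} {ν : Vertex p → M → Vertex p}
    {S T : Choice p} (hT : ν .hub (memAtHub μ S) = .answered T) (U : SmallChoice p) :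
    MemConsistentAdam (arena p) μ ν (play S T U) := by
  intro n hn
  obtain rfl : n = 2 := by
    rcases n with _ | _ | _ | _ | n <;> simp_all [arena, play]
  -- `memTrace μ (play S T U) 2` unfolds to `memAtHub μ S`
  exact hT.symm

theorem move_memAtHub {μ : MemStruct (Vertex p) M} {ν : Vertex p → M → Vertex p}
    (hwin : AdamWinsWithMem (arena p) (reachSets p) .init μ ν) (S : Choice p) :
    ν .hub (memAtHub μ S) = .answered S := by
  obtain ⟨hlegal, hwins⟩ := hwin
  obtain ⟨T, hT⟩ := Edge.hub_inv (hlegal .hub (memAtHub μ S))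
  rw [hT]
  by_contra hne
  have hST := card_lt_card_union_of_ne (fun h => hne (by rw [Subtype.ext h])) (S.2.trans T.2.symm)
  rw [S.2] at hST
  let U : SmallChoice p := ⟨(S.1 ∪ T.1)ᶜ, by rw [card_compl, Fintype.card_fin]; omega⟩
  exact hwins _ (isPlay_play S T U) (memConsistentAdam_play hT U)
    (genReach_play_iff.2 (union_compl _))

theorem memAtHub_injective {μ : MemStruct (Vertex p) M} {ν : Vertex p → M → Vertex p}
    (hwin : AdamWinsWithMem (arena p) (reachSets p) .init μ ν) :
    Function.Injective (memAtHub μ) := fun S S' h =>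
  Vertex.answered.inj ((move_memAtHub hwin S).symm.trans (h ▸ move_memAtHub hwin S'))

end Memory

end AdamMemoryLowerBound

/-- for every odd `k = 2p + 1` there is a generalized reachability game
with `k` reachability sets which Adam wins, but where every winning strategy for Adam
needs at least `C(k, p)` memory states. -/
theorem adam_memory_lower_bound (p : ℕ) :
    ∃ (V : Type) (instV : Fintype V) (A : Arena V)
      (F : Fin (2 * p + 1) → Set V) (v0 : V),
      AdamWinsGenReach A F v0 ∧
      ∀ (M : Type) (inst : Fintype M) (μ : MemStruct V M) (ν : V → M → V),
        AdamWinsWithMem A F v0 μ ν → Nat.choose (2 * p + 1) p ≤ @Fintype.card M inst := by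
  open AdamMemoryLowerBound in
  refine ⟨Vertex p, inferInstance, arena p, reachSets p, .init, adamWins, ?_⟩
  intro M _ μ ν hwin
  calc (2 * p + 1).choose p = Fintype.card (Choice p) := by simp [Fintype.card_finset_len]
    _ ≤ Fintype.card M := Fintype.card_le_of_injective _ (memAtHub_injective hwin)
end
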